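/- The generators of Γ₃ pair the sides of the 24-cell according to the side-pairing of the manifold 24c1.3: g₁s₁ = −s₅, g₂s₂ = −s₁₃, g₃s₃ = −s₁₆, g₄s₄ = −s₈, g₆s₆ = −s₂₁, g₇s₇ = −s₂₃, g₉s₉ = −s₁₈, g₁₀s₁₀ = −s₂₀, g₁₁s₁₁ = −s₂₄, g₁₂s₁₂ = −s₁₉, g₁₄s₁₄ = −s₁₅, g₁₇s₁₇ = −s₂₂ (each gᵢ maps the outward normal of side Sᵢ to the inward normal of its paired side). -/

import Mathlib

open Matrix

noncomputable def s : Fin 24 → Fin 5 → ℝ :=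
  ![![1, 1, 0, 0, 1],
    ![-1, 1, 0, 0, 1],
    ![1, -1, 0, 0, 1],
    ![-1, -1, 0, 0, 1],
    ![1, 0, 1, 0, 1],
    ![-1, 0, 1, 0, 1],
    ![1, 0, -1, 0, 1],
    ![-1, 0, -1, 0, 1],
    ![0, 1, 1, 0, 1],
    ![0, -1, 1, 0, 1],
    ![0, 1, -1, 0, 1],
    ![0, -1, -1, 0, 1],
    ![1, 0, 0, 1, 1],
    ![-1, 0, 0, 1, 1],
    ![1, 0, 0, -1, 1],
    ![-1, 0, 0, -1, 1],
    ![0, 1, 0, 1, 1],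
    ![0, -1, 0, 1, 1],
    ![0, 1, 0, -1, 1],
    ![0, -1, 0, -1, 1],
    ![0, 0, 1, 1, 1],
    ![0, 0, -1, 1, 1],
    ![0, 0, 1, -1, 1],
    ![0, 0, -1, -1, 1]]

noncomputable def g1 : Matrix (Fin 5) (Fin 5) ℝ :=
  (1/2 : ℝ) • !![-3, -3, -1, -1, 4; -1, 1, -1, 1, 0; -3, -3, 1, 1, 4; 1, -1, -1, 1, 0; -4, -4, 0, 0, 6]

noncomputable def g2 : Matrix (Fin 5) (Fin 5) ℝ :=
  (1/2 : ℝ) • !![3, -3, 1, 1, 4; -1, -1, 1, -1, 0; -1, -1, -1, 1, 0; 3, -3, -1, -1, 4; 4, -4, 0, 0, 6]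

noncomputable def g3 : Matrix (Fin 5) (Fin 5) ℝ :=
  (1/2 : ℝ) • !![3, -3, -1, 1, -4; 1, 1, -1, -1, 0; 1, 1, 1, 1, 0; 3, -3, 1, -1, -4; -4, 4, 0, 0, 6]

noncomputable def g4 : Matrix (Fin 5) (Fin 5) ℝ :=
  (1/2 : ℝ) • !![-3, -3, -1, 1, -4; 1, -1, -1, -1, 0; -3, -3, 1, -1, -4; -1, 1, -1, -1, 0; 4, 4, 0, 0, 6]

noncomputable def g6 : Matrix (Fin 5) (Fin 5) ℝ :=
  (1/2 : ℝ) • !![1, -1, 1, 1, 0; -1, -1, -1, 1, 0; 3, 1, -3, 1, 4; 3, -1, -3, -1, 4; 4, 0, -4, 0, 6]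

noncomputable def g7 : Matrix (Fin 5) (Fin 5) ℝ :=
  (1/2 : ℝ) • !![1, 1, 1, -1, 0; -1, 1, -1, -1, 0; -3, -1, 3, -1, 4; 3, -1, -3, -1, -4; -4, 0, 4, 0, 6]

noncomputable def g9 : Matrix (Fin 5) (Fin 5) ℝ :=
  (1/2 : ℝ) • !![-1, -1, 1, -1, 0; 1, 3, 3, -1, -4; -1, 1, -1, -1, 0; 1, -3, -3, -1, 4; 0, -4, -4, 0, 6]

noncomputable def g10 : Matrix (Fin 5) (Fin 5) ℝ :=
  (1/2 : ℝ) • !![1, -1, -1, -1, 0; 1, -3, 3, 1, -4; -1, -1, -1, 1, 0; -1, -3, 3, -1, -4; 0, 4, -4, 0, 6]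

noncomputable def g11 : Matrix (Fin 5) (Fin 5) ℝ :=
  (1/2 : ℝ) • !![-1, 1, 1, -1, 0; -1, -1, -1, -1, 0; 1, 3, -3, -1, -4; -1, 3, -3, 1, -4; 0, -4, 4, 0, 6]

noncomputable def g12 : Matrix (Fin 5) (Fin 5) ℝ :=
  !![0, 0, 0, 1, 0; 0, 2, 1, 0, 2; 1, 0, 0, 0, 0; 0, -1, -2, 0, -2; 0, 2, 2, 0, 3]

noncomputable def g14 : Matrix (Fin 5) (Fin 5) ℝ :=
  !![2, 0, 0, -1, 2; 0, 0, 1, 0, 0; 0, 1, 0, 0, 0; -1, 0, 0, 2, -2; 2, 0, 0, -2, 3]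

noncomputable def g17 : Matrix (Fin 5) (Fin 5) ℝ :=
  (1/2 : ℝ) • !![-1, 1, -1, -1, 0; 1, 1, 1, -1, 0; 1, 3, -1, 3, -4; 1, -3, -1, -3, 4; 0, -4, 0, -4, 6]

theorem stmt14 :
    g1.mulVec (s 0) = -s 4 ∧
    g2.mulVec (s 1) = -s 12 ∧
    g3.mulVec (s 2) = -s 15 ∧
    g4.mulVec (s 3) = -s 7 ∧
    g6.mulVec (s 5) = -s 20 ∧
    g7.mulVec (s 6) = -s 22 ∧
    g9.mulVec (s 8) = -s 17 ∧
    g10.mulVec (s 9) = -s 19 ∧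
    g11.mulVec (s 10) = -s 23 ∧
    g12.mulVec (s 11) = -s 18 ∧
    g14.mulVec (s 13) = -s 14 ∧
    g17.mulVec (s 16) = -s 21 := by
  simp only [g1, g2, g3, g4, g6, g7, g9, g10, g11, g12, g14, g17, s, smul_mulVec, cons_mulVec,
    empty_mulVec, cons_dotProduct_cons, dotProduct_of_isEmpty, cons_val, smul_cons, neg_cons,
    smul_empty, neg_empty]
  norm_num
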